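/- Let A ∈ ℝ^{n×n}, B ∈ ℝ^{n×m}, let Λ ∈ ℝ^{(n+m)×(n+m)} be symmetric positive semidefinite, let S ∈ ℝ^{(n+m)×(n+m)} be symmetric positive definite, and set H := S·Tᵀ where T := [A B] ∈ ℝ^{n×(n+m)}. Suppose G ∈ ℝ^{n×n}, symmetric P ∈ ℝ^{(n+m)×(n+m)}, and X ∈ ℝ^{n×m} satisfy that the block matrix [[−S·P·S + I, [G X]ᵀ], [[G X], Hᵀ·P·H − G − Gᵀ]] is negative definite. Then G is invertible, F := Xᵀ·(Gᵀ)⁻¹ satisfies ρ(A + B·F) < 1, the series 𝒥(F) := Σ_{k=0}^{∞} trace(Λ·A_F^k·(A_Fᵀ)^k) converges, and 𝒥(F) ≤ trace(Λ·S·P·S), where A_F := [[A, B], [F·A, F·B]]. -/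

import Mathlib

/-!
Write `Q := S P S`, `T := [A B]` and `L := [I; F]`, so that `A_F = L T`, `A + B F = T L` and
`Hᵀ P H = T Q Tᵀ`. The diagonal blocks of the LMI give `Q - I ≻ 0` and `G + Gᵀ ≻ T Q Tᵀ ⪰ 0`;
hence `G` is invertible and `[G X] = G Lᵀ`. The congruence of the LMI by `[I; Lᵀ]` is then the
Lyapunov inequality `I + A_F Q A_Fᵀ ≤ Q`. Tested on a left eigenvector it puts every eigenvalue
of `A_F`, and so every nonzero eigenvalue of `T L`, inside the open unit disc; telescoped it gives
`∑_{k<N} A_F^k (A_Fᵀ)^k ≤ Q`, which, traced against `Λ ⪰ 0`, bounds the cost.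
-/

open Matrix

/-- The spectral radius of a real square matrix: the supremum of the moduli of the
elements of the spectrum of the matrix regarded as a complex matrix. -/
noncomputable def specRad {N : Type*} [Fintype N] [DecidableEq N] (M : Matrix N N ℝ) : ℝ :=
  sSup ((fun z => ‖z‖) '' spectrum ℂ (M.map Complex.ofReal))

open scoped MatrixOrder ComplexOrder

namespace Matrix

variable {l m n p : Type*}

section Spectrum

variable [Fintype m] [Fintype n] [DecidableEq m] [DecidableEq n] {K : Type*} [Field K]

theorem spectrum_transpose (M : Matrix n n K) : spectrum K Mᵀ = spectrum K M := by
  ext z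
  simp only [mem_spectrum_iff_isRoot_charpoly, charpoly_transpose]

theorem mem_spectrum_mul_comm {A : Matrix m n K} {B : Matrix n m K} {z : K} (hz : z ≠ 0)
    (h : z ∈ spectrum K (A * B)) : z ∈ spectrum K (B * A) := by
  rw [mem_spectrum_iff_isRoot_charpoly, Polynomial.IsRoot] at h ⊢
  have := congrArg (Polynomial.eval z) (charpoly_mul_comm' A B)
  simp only [Polynomial.eval_mul, Polynomial.eval_pow, Polynomial.eval_X, h, mul_zero] at this
  exact (mul_eq_zero.mp this.symm).resolve_left (pow_ne_zero _ hz)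

theorem exists_mulVec_eq_smul_of_mem_spectrum {M : Matrix n n K} {z : K}
    (h : z ∈ spectrum K M) : ∃ v, v ≠ 0 ∧ M *ᵥ v = z • v := by
  rw [← spectrum_toLin', ← Module.End.hasEigenvalue_iff_mem_spectrum] at h
  obtain ⟨v, hv⟩ := h.exists_hasEigenvector
  exact ⟨v, hv.2, by simpa using hv.apply_eq_smul⟩

end Spectrum

section Complexification

theorem map_ofReal_mul [Fintype m] (A : Matrix l m ℝ) (B : Matrix m n ℝ) :
    (A * B).map Complex.ofReal = A.map Complex.ofReal * B.map Complex.ofReal :=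
  Matrix.map_mul (f := Complex.ofRealHom)

theorem conjTranspose_map_ofReal (M : Matrix m n ℝ) :
    (M.map Complex.ofReal)ᴴ = Mᵀ.map Complex.ofReal := by
  ext i j
  simp

theorem PosSemidef.map_ofReal [Fintype n] [DecidableEq n] {Q : Matrix n n ℝ}
    (hQ : Q.PosSemidef) : (Q.map Complex.ofReal).PosSemidef := by
  obtain ⟨Y, rfl⟩ := CStarAlgebra.nonneg_iff_eq_star_mul_self.mp hQ.nonneg
  rw [star_eq_conjTranspose, conjTranspose_eq_transpose_of_trivial, map_ofReal_mul,
    ← conjTranspose_map_ofReal]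
  exact posSemidef_conjTranspose_mul_self _

end Complexification

section Lyapunov

variable [Fintype n] [DecidableEq n] {M Q : Matrix n n ℝ}

theorem norm_lt_one_of_mem_spectrum (hQ : Q.PosSemidef) (hMQ : 1 + M * Q * Mᵀ ≤ Q) {z : ℂ}
    (hz : z ∈ spectrum ℂ (M.map Complex.ofReal)) : ‖z‖ < 1 := by
  rw [← spectrum_transpose, ← transpose_map, ← conjTranspose_map_ofReal] at hz
  obtain ⟨w, hw, hwz⟩ := exists_mulVec_eq_smul_of_mem_spectrum hz
  set Mc := M.map Complex.ofReal
  set Qc := Q.map Complex.ofReal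
  have hpos : (Qc - Mc * Qc * Mcᴴ).PosDef := by
    have h := PosDef.posSemidef_add (le_iff.mp hMQ).map_ofReal (PosDef.one (n := n) (R := ℂ))
    convert h using 1
    ext i j
    simp only [Mc, Qc, conjTranspose_map_ofReal, add_apply, sub_apply, map_apply, mul_apply,
      one_apply, transpose_apply]
    split_ifs <;> push_cast <;> ring
  have hquad : star w ⬝ᵥ ((Mc * Qc * Mcᴴ) *ᵥ w)
      = (Complex.normSq z : ℂ) * (star w ⬝ᵥ (Qc *ᵥ w)) := by
    have h : star w ᵥ* Mc = star (z • w) := by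
      rw [← hwz, star_mulVec, conjTranspose_conjTranspose]
    rw [← mulVec_mulVec, ← mulVec_mulVec, hwz, dotProduct_mulVec, h, mulVec_smul, star_smul,
      smul_dotProduct, dotProduct_smul, smul_smul, smul_eq_mul, Complex.normSq_eq_conj_mul_self]
    rfl
  have h1 := hpos.dotProduct_mulVec_pos hw
  rw [sub_mulVec, dotProduct_sub, hquad] at h1
  have h2 : 0 ≤ star w ⬝ᵥ (Qc *ᵥ w) := hQ.map_ofReal.dotProduct_mulVec_nonneg w
  have h1re := (Complex.lt_def.mp h1).1
  have h2re := (Complex.le_def.mp h2).1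
  simp only [Complex.zero_re, Complex.sub_re, Complex.re_ofReal_mul] at h1re h2re
  rw [Complex.normSq_eq_norm_sq] at h1re
  have hz2 : ‖z‖ ^ 2 < 1 := by
    by_contra! hc
    nlinarith [mul_nonneg h2re (sub_nonneg.mpr hc)]
  exact (sq_lt_one_iff₀ (norm_nonneg z)).mp hz2

theorem sum_pow_mul_transpose_pow_le (hQ : Q.PosSemidef) (hMQ : 1 + M * Q * Mᵀ ≤ Q) (N : ℕ) :
    ∑ k ∈ Finset.range N, M ^ k * Mᵀ ^ k ≤ Q := by
  suffices h : ∑ k ∈ Finset.range N, M ^ k * Mᵀ ^ k + M ^ N * Q * Mᵀ ^ N ≤ Q by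
    refine le_trans (le_add_of_nonneg_right ?_) h
    simpa [transpose_pow] using (hQ.mul_mul_conjTranspose_same (M ^ N)).nonneg
  induction N with
  | zero => simp
  | succ N ih =>
    calc ∑ k ∈ Finset.range (N + 1), M ^ k * Mᵀ ^ k + M ^ (N + 1) * Q * Mᵀ ^ (N + 1)
        = ∑ k ∈ Finset.range N, M ^ k * Mᵀ ^ k + M ^ N * (1 + M * Q * Mᵀ) * Mᵀ ^ N := by
          rw [Finset.sum_range_succ, pow_succ, pow_succ']
          noncomm_ring
      _ ≤ ∑ k ∈ Finset.range N, M ^ k * Mᵀ ^ k + M ^ N * Q * Mᵀ ^ N := by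
          gcongr
          simpa [star_eq_conjTranspose, transpose_pow] using
            star_right_conjugate_le_conjugate hMQ (M ^ N)
      _ ≤ Q := ih

theorem trace_mul_nonneg {Λ D : Matrix n n ℝ} (hΛ : Λ.PosSemidef) (hD : D.PosSemidef) :
    0 ≤ (Λ * D).trace := by
  obtain ⟨Y, rfl⟩ := CStarAlgebra.nonneg_iff_eq_star_mul_self.mp hΛ.nonneg
  rw [star_eq_conjTranspose, Matrix.mul_assoc, trace_mul_comm]
  exact (hD.mul_mul_conjTranspose_same Y).trace_nonneg

theorem sum_trace_mul_pow_mul_transpose_pow_le {Λ : Matrix n n ℝ} (hΛ : Λ.PosSemidef)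
    (hQ : Q.PosSemidef) (hMQ : 1 + M * Q * Mᵀ ≤ Q) (N : ℕ) :
    ∑ k ∈ Finset.range N, (Λ * (M ^ k * Mᵀ ^ k)).trace ≤ (Λ * Q).trace := by
  have h := trace_mul_nonneg hΛ (le_iff.mp (sum_pow_mul_transpose_pow_le hQ hMQ N))
  rw [Matrix.mul_sub, trace_sub, Finset.mul_sum, trace_sum] at h
  linarith

theorem trace_mul_pow_mul_transpose_pow_nonneg {Λ : Matrix n n ℝ} (hΛ : Λ.PosSemidef) (k : ℕ) :
    0 ≤ (Λ * (M ^ k * Mᵀ ^ k)).trace :=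
  trace_mul_nonneg hΛ <| by
    simpa [transpose_pow] using posSemidef_self_mul_conjTranspose (M ^ k)

theorem summable_trace_mul_pow_mul_transpose_pow {Λ : Matrix n n ℝ} (hΛ : Λ.PosSemidef)
    (hQ : Q.PosSemidef) (hMQ : 1 + M * Q * Mᵀ ≤ Q) :
    Summable fun k => (Λ * (M ^ k * Mᵀ ^ k)).trace :=
  summable_of_sum_range_le (trace_mul_pow_mul_transpose_pow_nonneg hΛ)
    (sum_trace_mul_pow_mul_transpose_pow_le hΛ hQ hMQ)

theorem tsum_trace_mul_pow_mul_transpose_pow_le {Λ : Matrix n n ℝ} (hΛ : Λ.PosSemidef)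
    (hQ : Q.PosSemidef) (hMQ : 1 + M * Q * Mᵀ ≤ Q) :
    ∑' k, (Λ * (M ^ k * Mᵀ ^ k)).trace ≤ (Λ * Q).trace :=
  Real.tsum_le_of_sum_range_le (trace_mul_pow_mul_transpose_pow_nonneg hΛ)
    (sum_trace_mul_pow_mul_transpose_pow_le hΛ hQ hMQ)

end Lyapunov

section LMI

theorem PosDef.fromBlocks_diag {R : Type*} [CommRing R] [PartialOrder R] [StarRing R]
    {A : Matrix p p R} {B : Matrix p n R} {C : Matrix n p R} {D : Matrix n n R}
    (h : (fromBlocks A B C D).PosDef) : A.PosDef ∧ D.PosDef :=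
  ⟨toBlocks_fromBlocks₁₁ A B C D ▸ h.submatrix Sum.inl_injective,
    toBlocks_fromBlocks₂₂ A B C D ▸ h.submatrix Sum.inr_injective⟩

variable [Fintype n] [DecidableEq n] [Fintype p] [DecidableEq p]

theorem isUnit_of_posDef_add_transpose {G : Matrix n n ℝ} (h : (G + Gᵀ).PosDef) : IsUnit G := by
  rw [isUnit_iff_isUnit_det, isUnit_iff_ne_zero]
  intro hdet
  obtain ⟨v, hv, hGv⟩ := exists_mulVec_eq_zero_iff.mpr hdet
  have := h.dotProduct_mulVec_pos hv
  rw [star_trivial, add_mulVec, dotProduct_add, mulVec_transpose, dotProduct_comm v (v ᵥ* G),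
    ← dotProduct_mulVec, hGv, dotProduct_zero, add_zero] at this
  exact this.false

theorem posSemidef_and_isUnit_of_posDef_fromBlocks {Q : Matrix p p ℝ} {G : Matrix n n ℝ}
    {T : Matrix n p ℝ} {B : Matrix p n ℝ} {C : Matrix n p ℝ}
    (h : (fromBlocks (Q - 1) B C (G + Gᵀ - T * Q * Tᵀ)).PosDef) : Q.PosSemidef ∧ IsUnit G := by
  obtain ⟨hQ1, hGK⟩ := h.fromBlocks_diag
  have hQ : Q.PosSemidef := by
    simpa using (hQ1.add_posSemidef PosSemidef.one).posSemidef
  refine ⟨hQ, isUnit_of_posDef_add_transpose ?_⟩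
  simpa using hGK.add_posSemidef (hQ.mul_mul_conjTranspose_same T)

omit [DecidableEq n] in
theorem posDef_sub_of_posDef_fromBlocks {W : Matrix p p ℝ} {G K : Matrix n n ℝ}
    {L : Matrix p n ℝ} (h : (fromBlocks W (-(L * Gᵀ)) (-(G * Lᵀ)) (G + Gᵀ - K)).PosDef) :
    (W - L * K * Lᵀ).PosDef := by
  have hV : Function.Injective (fromRows (1 : Matrix p p ℝ) Lᵀ).mulVec := fun x y hxy => by
    simpa using congrArg (· ∘ Sum.inl) hxy
  convert h.conjTranspose_mul_mul_same hV using 1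
  rw [conjTranspose_eq_transpose_of_trivial, transpose_fromRows, transpose_one,
    transpose_transpose, fromCols_mul_fromBlocks, fromCols_mul_fromRows]
  simp only [Matrix.one_mul, Matrix.mul_one, Matrix.mul_neg, Matrix.neg_mul, Matrix.mul_sub,
    Matrix.mul_add, Matrix.sub_mul, Matrix.add_mul, Matrix.mul_assoc]
  abel

omit [Fintype p] [DecidableEq p] in
theorem fromCols_eq_mul_transpose_fromRows {G : Matrix n n ℝ} (hG : IsUnit G)
    (X : Matrix n p ℝ) : fromCols G X = G * (fromRows 1 (Xᵀ * (Gᵀ)⁻¹))ᵀ := by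
  rw [transpose_fromRows, transpose_one, mul_fromCols, Matrix.mul_one, transpose_mul,
    transpose_transpose, transpose_nonsing_inv, transpose_transpose,
    mul_nonsing_inv_cancel_left _ _ ((isUnit_iff_isUnit_det G).mp hG)]

theorem lyapunov_of_posDef_fromBlocks [Fintype m] [DecidableEq m]
    {Q : Matrix (n ⊕ m) (n ⊕ m) ℝ} {G : Matrix n n ℝ} {X : Matrix n m ℝ}
    {T : Matrix n (n ⊕ m) ℝ} (hG : IsUnit G)
    (h : (fromBlocks (Q - 1) (-(fromCols G X)ᵀ) (-fromCols G X) (G + Gᵀ - T * Q * Tᵀ)).PosDef) :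
    1 + fromRows 1 (Xᵀ * (Gᵀ)⁻¹) * T * Q * (fromRows 1 (Xᵀ * (Gᵀ)⁻¹) * T)ᵀ ≤ Q := by
  rw [fromCols_eq_mul_transpose_fromRows hG, transpose_mul, transpose_transpose] at h
  rw [le_iff, ← sub_sub]
  simpa only [transpose_mul, Matrix.mul_assoc] using
    (posDef_sub_of_posDef_fromBlocks h).posSemidef

end LMI

end Matrix

theorem specRad_lt_one {N : Type*} [Fintype N] [DecidableEq N] {M : Matrix N N ℝ}
    (h : ∀ z ∈ spectrum ℂ (M.map Complex.ofReal), ‖z‖ < 1) : specRad M < 1 := by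
  rcases Set.eq_empty_or_nonempty ((fun z : ℂ => ‖z‖) '' spectrum ℂ (M.map Complex.ofReal))
    with he | hne
  · rw [specRad, he, Real.sSup_empty]
    exact one_pos
  · obtain ⟨z, hz, hz'⟩ := hne.csSup_mem ((finite_spectrum _).image _)
    rw [specRad, ← hz']
    exact h z hz

theorem specRad_mul_lt_one {n p : Type*} [Fintype n] [DecidableEq n] [Fintype p]
    [DecidableEq p] {T : Matrix n p ℝ} {L : Matrix p n ℝ} {Q : Matrix p p ℝ}
    (hQ : Q.PosSemidef) (hLTQ : 1 + L * T * Q * (L * T)ᵀ ≤ Q) : specRad (T * L) < 1 := by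
  refine specRad_lt_one fun z hz => ?_
  rcases eq_or_ne z 0 with rfl | hz0
  · simp
  rw [map_ofReal_mul] at hz
  refine norm_lt_one_of_mem_spectrum hQ hLTQ ?_
  rw [map_ofReal_mul]
  exact mem_spectrum_mul_comm hz0 hz

theorem data_driven_LQR_design_general {n m : ℕ}
    (A : Matrix (Fin n) (Fin n) ℝ) (B : Matrix (Fin n) (Fin m) ℝ)
    (Λ : Matrix (Fin n ⊕ Fin m) (Fin n ⊕ Fin m) ℝ) (hΛ : Λ.PosSemidef)
    (S : Matrix (Fin n ⊕ Fin m) (Fin n ⊕ Fin m) ℝ) (hS : S.PosDef)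
    (H : Matrix (Fin n ⊕ Fin m) (Fin n) ℝ)
    (hH : H = S * (Matrix.fromCols A B)ᵀ)
    (G : Matrix (Fin n) (Fin n) ℝ) (P : Matrix (Fin n ⊕ Fin m) (Fin n ⊕ Fin m) ℝ)
    (X : Matrix (Fin n) (Fin m) ℝ)
    (hLMI : (-(Matrix.fromBlocks (-(S * P * S) + 1) (Matrix.fromCols G X)ᵀ
        (Matrix.fromCols G X) (Hᵀ * P * H - G - Gᵀ))).PosDef) :
    IsUnit G ∧
      specRad (A + B * (Xᵀ * (Gᵀ)⁻¹)) < 1 ∧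
      Summable (fun k : ℕ => Matrix.trace (Λ *
        ((Matrix.fromBlocks A B ((Xᵀ * (Gᵀ)⁻¹) * A) ((Xᵀ * (Gᵀ)⁻¹) * B)) ^ k *
          ((Matrix.fromBlocks A B ((Xᵀ * (Gᵀ)⁻¹) * A) ((Xᵀ * (Gᵀ)⁻¹) * B))ᵀ) ^ k))) ∧
      (∑' k : ℕ, Matrix.trace (Λ *
        ((Matrix.fromBlocks A B ((Xᵀ * (Gᵀ)⁻¹) * A) ((Xᵀ * (Gᵀ)⁻¹) * B)) ^ k *
          ((Matrix.fromBlocks A B ((Xᵀ * (Gᵀ)⁻¹) * A) ((Xᵀ * (Gᵀ)⁻¹) * B))ᵀ) ^ k))) ≤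
        Matrix.trace (Λ * (S * P * S)) := by
  classical
  set F := Xᵀ * (Gᵀ)⁻¹
  set T := fromCols A B
  set L := fromRows (1 : Matrix (Fin n) (Fin n) ℝ) F
  set Q := S * P * S
  have hSt : Sᵀ = S := by
    rw [← conjTranspose_eq_transpose_of_trivial]
    exact hS.isHermitian
  have hLMI' : (fromBlocks (Q - 1) (-(fromCols G X)ᵀ) (-fromCols G X)
      (G + Gᵀ - T * Q * Tᵀ)).PosDef := by
    convert hLMI using 1
    rw [fromBlocks_neg, hH, transpose_mul, transpose_transpose, hSt]
    congr 1 <;> simp only [Q, Matrix.mul_assoc] <;> abel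
  obtain ⟨hQ, hG⟩ := posSemidef_and_isUnit_of_posDef_fromBlocks hLMI'
  have hLyap : 1 + L * T * Q * (L * T)ᵀ ≤ Q := lyapunov_of_posDef_fromBlocks hG hLMI'
  have hAF : fromBlocks A B (F * A) (F * B) = L * T := by
    rw [fromRows_mul_fromCols, Matrix.one_mul, Matrix.one_mul]
  have hABF : A + B * F = T * L := by
    rw [fromCols_mul_fromRows, Matrix.mul_one]
  rw [hAF, hABF]
  exact ⟨hG, specRad_mul_lt_one hQ hLyap,
    summable_trace_mul_pow_mul_transpose_pow hΛ hQ hLyap,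
    tsum_trace_mul_pow_mul_transpose_pow_le hΛ hQ hLyap⟩

/-- Data-driven LQR design: if the LMI with top-left block `−S·P·S + I` is feasible,
then `G` is invertible, `F = Xᵀ·(Gᵀ)⁻¹` is stabilizing, the cost series
`𝒥(F) = Σ_k trace(Λ·A_F^k·(A_Fᵀ)^k)` converges, and `𝒥(F) ≤ trace(Λ·S·P·S)`. -/
theorem data_driven_LQR_design {n m : ℕ}
    (A : Matrix (Fin n) (Fin n) ℝ) (B : Matrix (Fin n) (Fin m) ℝ)
    (Λ : Matrix (Fin n ⊕ Fin m) (Fin n ⊕ Fin m) ℝ) (hΛ : Λ.PosSemidef)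
    (S : Matrix (Fin n ⊕ Fin m) (Fin n ⊕ Fin m) ℝ) (hS : S.PosDef)
    (H : Matrix (Fin n ⊕ Fin m) (Fin n) ℝ)
    (hH : H = S * (Matrix.fromCols A B)ᵀ)
    (G : Matrix (Fin n) (Fin n) ℝ) (P : Matrix (Fin n ⊕ Fin m) (Fin n ⊕ Fin m) ℝ)
    (X : Matrix (Fin n) (Fin m) ℝ) (hP : P.IsSymm)
    (hLMI : (-(Matrix.fromBlocks (-(S * P * S) + 1) (Matrix.fromCols G X)ᵀ
        (Matrix.fromCols G X) (Hᵀ * P * H - G - Gᵀ))).PosDef) :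
    IsUnit G ∧
      specRad (A + B * (Xᵀ * (Gᵀ)⁻¹)) < 1 ∧
      Summable (fun k : ℕ => Matrix.trace (Λ *
        ((Matrix.fromBlocks A B ((Xᵀ * (Gᵀ)⁻¹) * A) ((Xᵀ * (Gᵀ)⁻¹) * B)) ^ k *
          ((Matrix.fromBlocks A B ((Xᵀ * (Gᵀ)⁻¹) * A) ((Xᵀ * (Gᵀ)⁻¹) * B))ᵀ) ^ k))) ∧
      (∑' k : ℕ, Matrix.trace (Λ *
        ((Matrix.fromBlocks A B ((Xᵀ * (Gᵀ)⁻¹) * A) ((Xᵀ * (Gᵀ)⁻¹) * B)) ^ k *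
          ((Matrix.fromBlocks A B ((Xᵀ * (Gᵀ)⁻¹) * A) ((Xᵀ * (Gᵀ)⁻¹) * B))ᵀ) ^ k))) ≤
        Matrix.trace (Λ * (S * P * S)) :=
  data_driven_LQR_design_general A B Λ hΛ S hS H hH G P X hLMI
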